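/- arXiv:quant-ph/0403164 — 3 statements merged into one kernel-verified Lean document; each statement's English description precedes it below -/
import Mathlib

section
/- Let ε > 0, t ∈ ℕ, and let U, U' be unitary operators on a Hilbert space H with ‖U − U'‖ ≤ ε. Let P, Q be orthogonal projections on H and let v ∈ H with ‖v‖ = 1. Define p = ‖Q(UP)^t v‖² and p' = ‖Q(U'P)^t v‖². Then |p − p'| ≤ 2tε. -/
/-!
Both `Q (UP)^t` and `Q (U'P)^t` are contractions, since unitaries and orthogonal projections
have norm at most one. Telescoping
`Q a^(n+1) - Q b^(n+1) = (Q a^n - Q b^n) a + Q b^n (a - b)` shows that their difference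
has norm at most `t ‖UP - U'P‖ ≤ t ε`, and for vectors `x, y` in the unit ball
`|‖x‖² - ‖y‖²| = |‖x‖ - ‖y‖| (‖x‖ + ‖y‖) ≤ 2 ‖x - y‖`.
-/

section SeminormedRing

variable {R : Type*} [SeminormedRing R] {q a b : R}

theorem norm_mul_pow_le_one (hq : ‖q‖ ≤ 1) (ha : ‖a‖ ≤ 1) (n : ℕ) : ‖q * a ^ n‖ ≤ 1 := by
  induction n with
  | zero => simpa using hq
  | succ n ih =>
    rw [pow_succ, ← mul_assoc]
    exact (norm_mul_le _ _).trans (mul_le_one₀ ih (norm_nonneg _) ha)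

theorem norm_mul_pow_sub_mul_pow_le (hq : ‖q‖ ≤ 1) (ha : ‖a‖ ≤ 1) (hb : ‖b‖ ≤ 1) (n : ℕ) :
    ‖q * a ^ n - q * b ^ n‖ ≤ n * ‖a - b‖ := by
  induction n with
  | zero => simp
  | succ n ih =>
    have htelescope : q * a ^ (n + 1) - q * b ^ (n + 1)
        = (q * a ^ n - q * b ^ n) * a + q * b ^ n * (a - b) := by
      simp only [pow_succ]
      noncomm_ring
    calc ‖q * a ^ (n + 1) - q * b ^ (n + 1)‖
        ≤ ‖q * a ^ n - q * b ^ n‖ * ‖a‖ + ‖q * b ^ n‖ * ‖a - b‖ := by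
          rw [htelescope]
          exact (norm_add_le _ _).trans (add_le_add (norm_mul_le _ _) (norm_mul_le _ _))
      _ ≤ n * ‖a - b‖ * 1 + 1 * ‖a - b‖ := by
          gcongr
          exact norm_mul_pow_le_one hq hb n
      _ = (n + 1 : ℕ) * ‖a - b‖ := by push_cast; ring

end SeminormedRing

theorem abs_norm_sq_sub_norm_sq_le {E : Type*} [SeminormedAddCommGroup E] {x y : E}
    (hx : ‖x‖ ≤ 1) (hy : ‖y‖ ≤ 1) : |‖x‖ ^ 2 - ‖y‖ ^ 2| ≤ 2 * ‖x - y‖ := by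
  rw [sq_sub_sq, abs_mul, abs_of_nonneg (by positivity : 0 ≤ ‖x‖ + ‖y‖)]
  gcongr
  · linarith
  · exact abs_norm_sub_norm_le x y

theorem ContinuousLinearMap.abs_norm_sq_apply_sub_norm_sq_apply_le {𝕜 E F : Type*}
    [NontriviallyNormedField 𝕜] [SeminormedAddCommGroup E] [SeminormedAddCommGroup F]
    [NormedSpace 𝕜 E] [NormedSpace 𝕜 F] {T S : E →L[𝕜] F} (hT : ‖T‖ ≤ 1) (hS : ‖S‖ ≤ 1)
    {x : E} (hx : ‖x‖ ≤ 1) : |‖T x‖ ^ 2 - ‖S x‖ ^ 2| ≤ 2 * ‖T - S‖ := by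
  have hbound {A : E →L[𝕜] F} {c : ℝ} (hA : ‖A‖ ≤ c) (hc : 0 ≤ c) : ‖A x‖ ≤ c :=
    (A.le_of_opNorm_le hA x).trans (mul_le_of_le_one_right hc hx)
  calc |‖T x‖ ^ 2 - ‖S x‖ ^ 2| ≤ 2 * ‖(T - S) x‖ :=
        abs_norm_sq_sub_norm_sq_le (hbound hT zero_le_one) (hbound hS zero_le_one)
    _ ≤ 2 * ‖T - S‖ := by gcongr; exact hbound le_rfl (norm_nonneg _)

theorem stmt_1_general {H : Type*} [NormedAddCommGroup H] [InnerProductSpace ℂ H]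
    [FiniteDimensional ℂ H]
    (ε : ℝ) (t : ℕ)
    (U U' : H →L[ℂ] H) (hU : U ∈ unitary (H →L[ℂ] H)) (hU' : U' ∈ unitary (H →L[ℂ] H))
    (hUU' : ‖U - U'‖ ≤ ε)
    (P Q : H →L[ℂ] H)
    (hP : IsSelfAdjoint P) (hPi : P ∘L P = P)
    (hQ : IsSelfAdjoint Q) (hQi : Q ∘L Q = Q)
    (v : H) (hv : ‖v‖ = 1) :
    |‖Q (((U ∘L P) ^ t) v)‖ ^ 2 - ‖Q (((U' ∘L P) ^ t) v)‖ ^ 2| ≤ 2 * t * ε := by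
  have hP1 : ‖P‖ ≤ 1 := IsStarProjection.norm_le P ⟨hPi, hP⟩
  have hQ1 : ‖Q‖ ≤ 1 := IsStarProjection.norm_le Q ⟨hQi, hQ⟩
  have hUP : ‖U * P‖ ≤ 1 := (CStarRing.norm_mem_unitary_mul P hU).trans_le hP1
  have hU'P : ‖U' * P‖ ≤ 1 := (CStarRing.norm_mem_unitary_mul P hU').trans_le hP1
  have hdiff : ‖U * P - U' * P‖ ≤ ε :=
    calc ‖U * P - U' * P‖ ≤ ‖U - U'‖ * ‖P‖ := sub_mul U U' P ▸ norm_mul_le _ _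
      _ ≤ ε * 1 := by gcongr; exact (norm_nonneg _).trans hUU'
      _ = ε := mul_one ε
  calc |‖(Q * (U * P) ^ t) v‖ ^ 2 - ‖(Q * (U' * P) ^ t) v‖ ^ 2|
      ≤ 2 * ‖Q * (U * P) ^ t - Q * (U' * P) ^ t‖ :=
        ContinuousLinearMap.abs_norm_sq_apply_sub_norm_sq_apply_le
          (norm_mul_pow_le_one hQ1 hUP t) (norm_mul_pow_le_one hQ1 hU'P t) hv.le
    _ ≤ 2 * (t * ε) := by
        gcongr
        exact (norm_mul_pow_sub_mul_pow_le hQ1 hUP hU'P t).trans (by gcongr)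
    _ = 2 * t * ε := by ring

/-- If `U, U'` are unitaries with `‖U - U'‖ ≤ ε`, `P, Q` orthogonal projections,
and `v` a unit vector, then the acceptance probabilities
`p = ‖Q (UP)^t v‖²` and `p' = ‖Q (U'P)^t v‖²` satisfy `|p - p'| ≤ 2tε`. -/
theorem stmt_1 {H : Type*} [NormedAddCommGroup H] [InnerProductSpace ℂ H]
    [FiniteDimensional ℂ H]
    (ε : ℝ) (hε : 0 < ε) (t : ℕ)
    (U U' : H →L[ℂ] H) (hU : U ∈ unitary (H →L[ℂ] H)) (hU' : U' ∈ unitary (H →L[ℂ] H))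
    (hUU' : ‖U - U'‖ ≤ ε)
    (P Q : H →L[ℂ] H)
    (hP : IsSelfAdjoint P) (hPi : P ∘L P = P)
    (hQ : IsSelfAdjoint Q) (hQi : Q ∘L Q = Q)
    (v : H) (hv : ‖v‖ = 1) :
    |‖Q (((U ∘L P) ^ t) v)‖ ^ 2 - ‖Q (((U' ∘L P) ^ t) v)‖ ^ 2| ≤ 2 * t * ε :=
  stmt_1_general ε t U U' hU hU' hUU' P Q hP hPi hQ hQi v hv
end

section
/- Let G be a deterministic branching program on n variables in which every node lies on a path from the start node where each variable is tested at most once (read-once), and suppose the function f computed by G is k-stable. Then G has at least 2^{k−1} nodes. -/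
/-!
Answer the first `k - 1` queries of `G` by a fixed bit string `σ`, whatever variable is
queried. Stability shows that no sink is met along the way, and read-once shows that the
`k - 1` queried variables are distinct and are never queried again afterwards. So if two
strings led to the same node `v`, inputs following them and agreeing off the queried variables
would be computed identically from `v` on. Stability on at most `k` variables excludes this
unless both strings query the same variables and then coincide; hence `σ ↦ v` is injective on
`{0,1}^(k-1)`.
-/

/-- A deterministic branching program on `n` Boolean variables:
nodes are `Fin size`; a node `v` is a sink labeled `b` iff `sinkVal v = some b`;
an interior node `v` is labeled by variable `var v` and has `b`-successor
`next v b`. -/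
structure DetBP (n : ℕ) where
  size : ℕ
  start : Fin size
  sinkVal : Fin size → Option Bool
  var : Fin size → Fin n
  next : Fin size → Bool → Fin size

namespace DetBP

variable {n : ℕ} (G : DetBP n)

/-- One computation step on input `a`. -/
def step (a : Fin n → Bool) (v : Fin G.size) : Fin G.size :=
  G.next v (a (G.var v))

/-- Evaluation with fuel: follow the computation path until a sink is reached. -/
def evalAux (a : Fin n → Bool) : ℕ → Fin G.size → Option Bool
  | 0, _ => none
  | (k + 1), v =>
    match G.sinkVal v with
    | some b => some b
    | none => evalAux a k (G.step a v)

/-- The output of `G` on input `a` (a branching program is acyclic, so `size`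
steps of fuel suffice). -/
def eval (a : Fin n → Bool) : Option Bool :=
  G.evalAux a G.size G.start

/-- There is an edge from `v` to `w` (for some Boolean edge label). -/
def Edge (v w : Fin G.size) : Prop :=
  G.sinkVal v = none ∧ ∃ b, G.next v b = w

/-- A list of nodes is a path of `G` if consecutive nodes are joined by edges. -/
def IsPath : List (Fin G.size) → Prop
  | [] => True
  | [_] => True
  | (v :: w :: rest) => G.Edge v w ∧ IsPath (w :: rest)

/-- `G` is read-once: on every path starting at the start node, each variable
labels at most one interior node. -/
def ReadOnce : Prop :=
  ∀ p : List (Fin G.size), G.IsPath p → p.head? = some G.start →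
    ((p.filter (fun v => (G.sinkVal v).isNone)).map G.var).Nodup

end DetBP

/-- `f` is `k`-stable: for every set `V` of `k` variables and every `x_i ∈ V`
there is an assignment to the variables outside `V` such that the induced
subfunction is `x_i` or its negation. -/
def kStable (n k : ℕ) (f : (Fin n → Bool) → Bool) : Prop :=
  ∀ V : Finset (Fin n), V.card = k → ∀ i ∈ V, ∃ ρ : Fin n → Bool,
    (∀ a : Fin n → Bool, (∀ j, j ∉ V → a j = ρ j) → f a = a i) ∨
    (∀ a : Fin n → Bool, (∀ j, j ∉ V → a j = ρ j) → f a = !(a i))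

lemma kStable.exists_ne {n k : ℕ} {f : (Fin n → Bool) → Bool} (hst : kStable n k f)
    (hkn : k ≤ n) {S : Finset (Fin n)} (hSk : S.card ≤ k) {i : Fin n} (hi : i ∈ S)
    {α β : Fin n → Bool} (hαβ : α i ≠ β i) :
    ∃ x y : Fin n → Bool, (∀ j ∈ S, x j = α j) ∧ (∀ j ∈ S, y j = β j) ∧
      (∀ j ∉ S, x j = y j) ∧ f x ≠ f y := by
  classical
  obtain ⟨W, hSW, hW⟩ := Finset.exists_superset_card_eq hSk (by simpa using hkn)
  obtain ⟨ρ, hρ⟩ := hst W hW i (hSW hi)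
  have hout : ∀ γ, ∀ j ∉ W, S.piecewise γ ρ j = ρ j :=
    fun γ j hj => S.piecewise_eq_of_notMem _ _ fun hjS => hj (hSW hjS)
  refine ⟨S.piecewise α ρ, S.piecewise β ρ, fun j hj => S.piecewise_eq_of_mem _ _ hj,
    fun j hj => S.piecewise_eq_of_mem _ _ hj,
    fun j hj => by simp only [S.piecewise_eq_of_notMem _ _ hj], ?_⟩
  rcases hρ with h | h <;>
    simpa [h _ (hout α), h _ (hout β), S.piecewise_eq_of_mem _ _ hi] using hαβ

namespace DetBP

variable {n : ℕ} (G : DetBP n)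

section Run

variable {a b : Fin n → Bool} {m m₁ m₂ : ℕ} {v : Fin G.size} {c d : Bool}

lemma evalAux_succ_of_sink (h : G.sinkVal v = some c) :
    G.evalAux a (m + 1) v = some c := by
  simp [evalAux, h]

lemma evalAux_succ_of_interior (h : G.sinkVal v = none) :
    G.evalAux a (m + 1) v = G.evalAux a m (G.step a v) := by
  simp [evalAux, h]

lemma evalAux_functional :
    G.evalAux a m₁ v = some c → G.evalAux a m₂ v = some d → c = d := by
  induction m₁ generalizing m₂ v with
  | zero => simp [evalAux]
  | succ m₁ ih =>
    cases m₂ with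
    | zero => simp [evalAux]
    | succ m₂ =>
      cases h : G.sinkVal v with
      | some e => simp_all [evalAux_succ_of_sink]
      | none => simpa only [evalAux_succ_of_interior G h] using ih

def run (a : Fin n → Bool) : ℕ → Fin G.size → List (Fin G.size)
  | 0, v => [v]
  | m + 1, v =>
    match G.sinkVal v with
    | some _ => [v]
    | none => v :: run a m (G.step a v)

lemma run_succ_of_sink (h : G.sinkVal v = some c) : G.run a (m + 1) v = [v] := by
  simp [run, h]

lemma run_succ_of_interior (h : G.sinkVal v = none) :
    G.run a (m + 1) v = v :: G.run a m (G.step a v) := by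
  simp [run, h]

lemma head?_run : (G.run a m v).head? = some v := by
  cases m with
  | zero => rfl
  | succ m => cases h : G.sinkVal v <;> simp [run, h]

lemma isChain_run : (G.run a m v).IsChain G.Edge := by
  induction m generalizing v with
  | zero => simp [run]
  | succ m ih =>
    cases h : G.sinkVal v with
    | some e => simp [run_succ_of_sink G h]
    | none =>
      rw [run_succ_of_interior G h, List.isChain_cons]
      refine ⟨fun w hw => ?_, ih⟩
      rw [head?_run, Option.mem_some_iff] at hw
      exact ⟨h, _, hw⟩

lemma run_of_sink (h : G.sinkVal v = some c) : G.run a m v = [v] := by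
  cases m with
  | zero => rfl
  | succ m => exact G.run_succ_of_sink h

lemma evalAux_congr
    (hab : ∀ u ∈ G.run a m v, G.sinkVal u = none → a (G.var u) = b (G.var u)) :
    G.evalAux a m v = G.evalAux b m v := by
  induction m generalizing v with
  | zero => rfl
  | succ m ih =>
    cases h : G.sinkVal v with
    | some e => simp only [evalAux_succ_of_sink G h]
    | none =>
      rw [run_succ_of_interior G h] at hab
      have hstep : G.step a v = G.step b v := by
        simp only [step, hab v List.mem_cons_self h]
      rw [evalAux_succ_of_interior G h, evalAux_succ_of_interior G h, ← hstep]
      exact ih fun u hu => hab u (List.mem_cons_of_mem v hu)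

def NeverReads (v : Fin G.size) (S : Finset (Fin n)) : Prop :=
  ∀ a m, ∀ u ∈ G.run a m v, G.sinkVal u = none → G.var u ∉ S

variable {G}

lemma NeverReads.mono {S T : Finset (Fin n)} (hS : G.NeverReads v S) (hTS : T ⊆ S) :
    G.NeverReads v T :=
  fun a m u hu hint hT => hS a m u hu hint (hTS hT)

lemma NeverReads.union {S T : Finset (Fin n)} (hS : G.NeverReads v S) (hT : G.NeverReads v T) :
    G.NeverReads v (S ∪ T) := by
  intro a m u hu hint hST
  rcases Finset.mem_union.mp hST with h | h
  exacts [hS a m u hu hint h, hT a m u hu hint h]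

lemma neverReads_univ_of_sink (h : G.sinkVal v = some c) : G.NeverReads v Finset.univ := by
  intro a m u hu hint
  rw [run_of_sink G h, List.mem_singleton] at hu
  simp_all

lemma NeverReads.eq_of_evalAux {S : Finset (Fin n)} (hS : G.NeverReads v S)
    (hab : ∀ j ∉ S, a j = b j) (ha : G.evalAux a m₁ v = some c)
    (hb : G.evalAux b m₂ v = some d) : c = d := by
  rw [G.evalAux_congr fun u hu hint => hab _ (hS a m₁ u hu hint)] at ha
  exact G.evalAux_functional ha hb

end Run

lemma isPath_iff_isChain : ∀ l : List (Fin G.size), G.IsPath l ↔ l.IsChain G.Edge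
  | [] | [_] => by simp [IsPath]
  | v :: w :: l => by
    rw [List.isChain_cons_cons, ← isPath_iff_isChain (w :: l)]
    rfl

section Walk

variable (s : ℕ → Bool)

def walk : ℕ → Fin G.size
  | 0 => G.start
  | t + 1 => G.next (walk t) (s t)

def walkVar (t : ℕ) : Fin n := G.var (G.walk s t)

def walkVars (t : ℕ) : Finset (Fin n) := (Finset.range t).image (G.walkVar s)

def IsInteriorWalk (t : ℕ) : Prop := ∀ m < t, G.sinkVal (G.walk s m) = none

def Follows (t : ℕ) (a : Fin n → Bool) : Prop := ∀ m < t, a (G.walkVar s m) = s m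

variable {G s} {t : ℕ}

lemma walk_congr {s' : ℕ → Bool} (h : ∀ m < t, s m = s' m) : G.walk s t = G.walk s' t := by
  induction t with
  | zero => rfl
  | succ t ih => simp only [walk, ih fun m hm => h m (by omega), h t (by omega)]

lemma Follows.of_eqOn {a b : Fin n → Bool} (ha : G.Follows s t a)
    (hb : ∀ j ∈ G.walkVars s t, b j = a j) : G.Follows s t b := fun m hm =>
  (hb _ (Finset.mem_image_of_mem _ (Finset.mem_range.mpr hm))).trans (ha m hm)

lemma Follows.update {a : Fin n → Bool} (ha : G.Follows s t a) {i : Fin n}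
    (hi : i ∉ G.walkVars s t) (b : Bool) : G.Follows s t (Function.update a i b) :=
  ha.of_eqOn fun _ hj => Function.update_of_ne (ne_of_mem_of_not_mem hj hi) _ _

lemma exists_follows (hinj : Set.InjOn (G.walkVar s) (Set.Iio t)) :
    ∃ a, G.Follows s t a :=
  ⟨s ∘ Function.invFunOn (G.walkVar s) (Set.Iio t),
    fun _ hm => congrArg s (hinj.leftInvOn_invFunOn hm)⟩

lemma exists_evalAux_walk {a : Fin n → Bool} {c : Bool} (hs : G.IsInteriorWalk s t)
    (ha : G.Follows s t a) (hc : G.eval a = some c) :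
    ∃ m, G.evalAux a m (G.walk s t) = some c := by
  induction t with
  | zero => exact ⟨G.size, hc⟩
  | succ t ih =>
    obtain ⟨m, hm⟩ := ih (fun j hj => hs j (by omega)) fun j hj => ha j (by omega)
    cases m with
    | zero => simp [evalAux] at hm
    | succ m =>
      refine ⟨m, ?_⟩
      rwa [evalAux_succ_of_interior G (hs t (by omega)), step, ← walkVar,
        ha t (by omega)] at hm

lemma isPath_walk_append_run (hs : G.IsInteriorWalk s t) (a : Fin n → Bool) (m : ℕ) :
    G.IsPath ((List.range t).map (G.walk s) ++ G.run a m (G.walk s t)) := by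
  rw [isPath_iff_isChain]
  refine List.IsChain.append ?_ G.isChain_run ?_
  · rw [List.isChain_map, List.isChain_range]
    exact fun j hj => ⟨hs j (by omega), s j, rfl⟩
  · intro u hu w hw
    rw [List.getLast?_map, List.getLast?_range] at hu
    rw [head?_run, Option.mem_some_iff] at hw
    obtain ⟨t, rfl⟩ : ∃ t', t = t' + 1 :=
      Nat.exists_eq_add_one.mpr (Nat.pos_of_ne_zero (by rintro rfl; simp at hu))
    simp only [Nat.add_one_ne_zero, if_false, Nat.add_sub_cancel, Option.map_some,
      Option.mem_some_iff] at hu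
    exact ⟨hu ▸ hs t (by omega), s t, hu ▸ hw⟩

lemma head?_walk_append_run (a : Fin n → Bool) (m : ℕ) :
    ((List.range t).map (G.walk s) ++ G.run a m (G.walk s t)).head? = some G.start := by
  cases t <;> simp [List.head?_append, List.head?_range, head?_run, walk]

lemma ReadOnce.nodup_walkVar_append (hro : G.ReadOnce) (hs : G.IsInteriorWalk s t)
    (a : Fin n → Bool) (m : ℕ) :
    ((List.range t).map (G.walkVar s) ++
      ((G.run a m (G.walk s t)).filter (fun u => (G.sinkVal u).isNone)).map G.var).Nodup := by
  have hprefix : ((List.range t).map (G.walk s)).filter (fun u => (G.sinkVal u).isNone) =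
      (List.range t).map (G.walk s) := by
    rw [List.filter_eq_self]
    intro u hu
    obtain ⟨j, hj, rfl⟩ := List.mem_map.mp hu
    simp [hs j (List.mem_range.mp hj)]
  have := hro _ (isPath_walk_append_run hs a m) (G.head?_walk_append_run a m)
  rwa [List.filter_append, hprefix, List.map_append, List.map_map] at this

lemma ReadOnce.injOn_walkVar (hro : G.ReadOnce) (hs : G.IsInteriorWalk s t) :
    Set.InjOn (G.walkVar s) (Set.Iio t) := by
  have hnd := (List.nodup_append.mp (hro.nodup_walkVar_append hs (fun _ => false) 0)).1
  intro i hi j hj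
  exact List.inj_on_of_nodup_map hnd (List.mem_range.mpr hi) (List.mem_range.mpr hj)

lemma ReadOnce.card_walkVars (hro : G.ReadOnce) (hs : G.IsInteriorWalk s t) :
    (G.walkVars s t).card = t := by
  rw [walkVars, Finset.card_image_of_injOn, Finset.card_range]
  simpa [Set.InjOn] using hro.injOn_walkVar hs

lemma ReadOnce.neverReads_walkVars (hro : G.ReadOnce) (hs : G.IsInteriorWalk s t) :
    G.NeverReads (G.walk s t) (G.walkVars s t) := by
  intro a m u hu hint hmem
  obtain ⟨j, hj, hju⟩ := Finset.mem_image.mp hmem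
  refine (List.nodup_append.mp (hro.nodup_walkVar_append hs a m)).2.2 _
    (List.mem_map_of_mem (List.mem_range.mpr (Finset.mem_range.mp hj))) _
    (List.mem_map_of_mem (List.mem_filter.mpr ⟨hu, by simp [hint]⟩)) hju

end Walk

section Stable

variable {G} {k : ℕ} {f : (Fin n → Bool) → Bool}

/-- A fooling-set argument: extensions of `α` and `β` that agree off `S` reach the same node
and are read identically from there, so by stability they cannot differ on `S`. -/
lemma eq_of_follows_of_walk_eq (hkn : k ≤ n) (hst : kStable n k f)
    (hcomp : ∀ a, G.eval a = some (f a)) {s₁ s₂ : ℕ → Bool} {t : ℕ}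
    (h₁ : G.IsInteriorWalk s₁ t) (h₂ : G.IsInteriorWalk s₂ t)
    (hwalk : G.walk s₁ t = G.walk s₂ t) {S : Finset (Fin n)} (hSk : S.card ≤ k)
    (hS : G.NeverReads (G.walk s₁ t) S) (hS₁ : G.walkVars s₁ t ⊆ S)
    (hS₂ : G.walkVars s₂ t ⊆ S) {α β : Fin n → Bool} (hα : G.Follows s₁ t α)
    (hβ : G.Follows s₂ t β) : ∀ i ∈ S, α i = β i := by
  intro i hi
  by_contra hαβ
  obtain ⟨x, y, hxα, hyβ, hxy, hfxy⟩ := hst.exists_ne hkn hSk hi hαβ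
  obtain ⟨mx, hmx⟩ := exists_evalAux_walk h₁ (hα.of_eqOn fun j hj => hxα j (hS₁ hj)) (hcomp x)
  obtain ⟨my, hmy⟩ := exists_evalAux_walk h₂ (hβ.of_eqOn fun j hj => hyβ j (hS₂ hj)) (hcomp y)
  exact hfxy (hS.eq_of_evalAux hxy hmx (hwalk ▸ hmy))

lemma isInteriorWalk_of_lt (hkn : k ≤ n) (hst : kStable n k f)
    (hcomp : ∀ a, G.eval a = some (f a)) (hro : G.ReadOnce) (s : ℕ → Bool) :
    ∀ t < k, G.IsInteriorWalk s t
  | 0, _ => fun _ h => absurd h (Nat.not_lt_zero _)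
  | t + 1, ht => by
    have hs := isInteriorWalk_of_lt hkn hst hcomp hro s t (by omega)
    intro m hm
    rcases Nat.lt_succ_iff_lt_or_eq.mp hm with hm | rfl
    · exact hs m hm
    cases hsink : G.sinkVal (G.walk s m) with
    | none => rfl
    | some c =>
      exfalso
      have hcard := hro.card_walkVars hs
      have hlt : (G.walkVars s m).card < (Finset.univ : Finset (Fin n)).card := by
        rw [hcard, Finset.card_univ, Fintype.card_fin]
        omega
      obtain ⟨i, -, hi⟩ := Finset.exists_mem_notMem_of_card_lt_card hlt
      obtain ⟨α, hα⟩ := exists_follows (hro.injOn_walkVar hs)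
      have := eq_of_follows_of_walk_eq hkn hst hcomp hs hs rfl
        (by rw [Finset.card_insert_of_notMem hi, hcard]; omega)
        ((neverReads_univ_of_sink hsink).mono (Finset.subset_univ _))
        (Finset.subset_insert _ _) (Finset.subset_insert _ _) hα (hα.update hi (!α i))
        i (Finset.mem_insert_self i _)
      simp at this

lemma walkVars_subset_of_walk_eq (hkn : k ≤ n) (hst : kStable n k f)
    (hcomp : ∀ a, G.eval a = some (f a)) (hro : G.ReadOnce) {s s' : ℕ → Bool} {K : ℕ}
    (hK : K < k) (hs : G.IsInteriorWalk s K) (hs' : G.IsInteriorWalk s' K)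
    (hwalk : G.walk s K = G.walk s' K) : G.walkVars s K ⊆ G.walkVars s' K := by
  intro w hw
  by_contra hw'
  obtain ⟨α, hα⟩ := exists_follows (hro.injOn_walkVar hs')
  have hS : G.NeverReads (G.walk s' K) (insert w (G.walkVars s' K)) :=
    ((hwalk ▸ hro.neverReads_walkVars hs).union (hro.neverReads_walkVars hs')).mono
      (Finset.insert_subset (Finset.mem_union_left _ hw) Finset.subset_union_right)
  have := eq_of_follows_of_walk_eq hkn hst hcomp hs' hs' rfl
    (by rw [Finset.card_insert_of_notMem hw', hro.card_walkVars hs']; omega) hS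
    (Finset.subset_insert _ _) (Finset.subset_insert _ _) hα (hα.update hw' (!α w))
    w (Finset.mem_insert_self w _)
  simp at this

lemma eq_of_walk_eq (hkn : k ≤ n) (hst : kStable n k f)
    (hcomp : ∀ a, G.eval a = some (f a)) (hro : G.ReadOnce) {s s' : ℕ → Bool} {K : ℕ}
    (hK : K < k) (hs : G.IsInteriorWalk s K) (hs' : G.IsInteriorWalk s' K)
    (hwalk : G.walk s K = G.walk s' K) : ∀ m < K, s m = s' m := by
  obtain ⟨α, hα⟩ := exists_follows (hro.injOn_walkVar hs)
  obtain ⟨β, hβ⟩ := exists_follows (hro.injOn_walkVar hs')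
  have hαβ := eq_of_follows_of_walk_eq hkn hst hcomp hs hs' hwalk
    (by rw [hro.card_walkVars hs]; omega) (hro.neverReads_walkVars hs) le_rfl
    (walkVars_subset_of_walk_eq hkn hst hcomp hro hK hs' hs hwalk.symm) hα hβ
  intro m
  induction m using Nat.strong_induction_on with
  | _ m ih =>
    intro hm
    have hprefix : G.walk s m = G.walk s' m := walk_congr fun j hj => ih j hj (by omega)
    have := hαβ _ (Finset.mem_image_of_mem _ (Finset.mem_range.mpr hm))
    rwa [hα m hm, walkVar, hprefix, ← walkVar, hβ m hm] at this

end Stable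

end DetBP

/-- A read-once deterministic branching program computing a `k`-stable
function has at least `2^(k-1)` nodes. -/
theorem stmt_14 (n k : ℕ) (hk : 1 ≤ k) (hkn : k ≤ n)
    (G : DetBP n) (hro : G.ReadOnce)
    (f : (Fin n → Bool) → Bool) (hcomp : ∀ a, G.eval a = some (f a))
    (hst : kStable n k f) :
    2 ^ (k - 1) ≤ G.size := by
  obtain ⟨K, rfl⟩ : ∃ K, k = K + 1 := ⟨k - 1, by omega⟩
  let bits : (Fin K → Bool) → ℕ → Bool := fun σ m => if h : m < K then σ ⟨m, h⟩ else false
  have hint σ : G.IsInteriorWalk (bits σ) K :=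
    DetBP.isInteriorWalk_of_lt hkn hst hcomp hro _ K (by omega)
  have hinj : Function.Injective fun σ => G.walk (bits σ) K := by
    intro σ σ' hwalk
    funext m
    simpa [bits] using
      DetBP.eq_of_walk_eq hkn hst hcomp hro (by omega) (hint σ) (hint σ') hwalk m m.isLt
  simpa using Fintype.card_le_of_injective _ hinj
end

section
/- Let α be a real algebraic number and let f be a univariate integer polynomial with height ‖f‖ ≤ 2^d and deg(f) ≤ d such that f(α) ≠ 0. Then |f(α)| ≥ 2^{−O(d²)}, i.e., there is a constant c > 0 depending only on α such that |f(α)| ≥ 2^{−cd²} for all sufficiently large d. -/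
/-!
Let `g ∈ ℤ[X]` vanish at `α` and be, up to a scalar, the minimal polynomial of `α` over `ℚ`.
If `f(α) ≠ 0` then `f` and `g` are coprime over `ℚ`, so their resultant is a nonzero integer and
has absolute value at least `1`. Over `ℂ` the resultant equals
`lc(g)^(deg f) * ∏_{g(β) = 0} f(β)`, and each factor `f(β)` with `β ≠ α` is at most
`(d + 1) 2^d R^d ≤ (4R)^d` in absolute value, where `R ≥ 1` bounds the roots of `g`.
Hence `|f(α)| ≥ (|lc(g)| (4R)^(deg g))^(-d) = 2^(-O(d))`.
-/

open Polynomial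

theorem minpoly.isCoprime_of_aeval_ne_zero {F K : Type*} [Field F] [CommRing K] [IsDomain K]
    [Algebra F K] {α : K} (hα : IsIntegral F α) {f : F[X]} (hf : Polynomial.aeval α f ≠ 0) :
    IsCoprime (minpoly F α) f :=
  (minpoly.irreducible hα).coprime_iff_not_dvd.mpr fun h => hf (minpoly.dvd_iff.mp h)

namespace Polynomial

theorem resultant_ne_zero_of_isCoprime_map {R K : Type*} [CommRing R] [Field K]
    {φ : R →+* K} (hφ : Function.Injective φ) {g f : R[X]}
    (h : IsCoprime (g.map φ) (f.map φ)) : resultant g f ≠ 0 := by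
  have := resultant_ne_zero _ _ h
  rw [natDegree_map_eq_of_injective hφ, natDegree_map_eq_of_injective hφ,
    resultant_map_map] at this
  exact fun h0 => this (by rw [h0, map_zero])

theorem intCast_resultant_eq_leadingCoeff_pow_mul_prod_roots (g f : ℤ[X]) :
    ((resultant g f : ℤ) : ℂ) = (g.leadingCoeff : ℂ) ^ f.natDegree *
      ((g.map (algebraMap ℤ ℂ)).roots.map fun β => aeval β f).prod := by
  have hinj : Function.Injective (algebraMap ℤ ℂ) := RingHom.injective_int _
  have := resultant_eq_prod_eval (g.map (algebraMap ℤ ℂ)) (f.map (algebraMap ℤ ℂ)) _ le_rfl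
    (IsAlgClosed.splits _)
  rw [natDegree_map_eq_of_injective hinj, natDegree_map_eq_of_injective hinj, resultant_map_map,
    leadingCoeff_map_of_injective hinj] at this
  simpa only [eval_map_algebraMap, eq_intCast] using this

theorem norm_aeval_le_of_abs_coeff_le {𝕜 : Type*} [RCLike 𝕜] {f : ℤ[X]} {d : ℕ} {H R : ℝ}
    (hH : ∀ i, |(f.coeff i : ℝ)| ≤ H) (hfd : f.natDegree ≤ d) (hR : 1 ≤ R) {z : 𝕜}
    (hz : ‖z‖ ≤ R) : ‖aeval z f‖ ≤ (d + 1) * H * R ^ d := by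
  rw [aeval_eq_sum_range' (hfd.trans_lt d.lt_succ_self)]
  have hterm : ∀ i ∈ Finset.range (d + 1), ‖f.coeff i • z ^ i‖ ≤ H * R ^ d := fun i hi => by
    rw [zsmul_eq_mul, norm_mul, norm_pow, ← RCLike.ofReal_intCast, RCLike.norm_ofReal]
    gcongr
    · exact (abs_nonneg _).trans (hH 0)
    · exact hH i
    exact (pow_le_pow_left₀ (norm_nonneg z) hz i).trans
      (pow_le_pow_right₀ hR (Finset.mem_range_succ_iff.mp hi))
  calc _ ≤ ∑ i ∈ Finset.range (d + 1), ‖f.coeff i • z ^ i‖ := norm_sum_le _ _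
    _ ≤ ∑ _i ∈ Finset.range (d + 1), H * R ^ d := Finset.sum_le_sum hterm
    _ = (d + 1) * H * R ^ d := by simp [mul_assoc]

end Polynomial

theorem Multiset.norm_prod_le_pow_card {𝕜 : Type*} [NormedField 𝕜] {s : Multiset 𝕜} {B : ℝ}
    (hs : ∀ z ∈ s, ‖z‖ ≤ B) : ‖s.prod‖ ≤ B ^ card s := by
  rw [← normHom_apply, map_multiset_prod]
  calc (s.map normHom).prod ≤ (s.map fun _ => B).prod :=
        prod_map_le_prod_map₀ _ _ (fun z _ => norm_nonneg z) hs
    _ = B ^ card s := by simp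

namespace Polynomial

theorem one_le_norm_aeval_mul_of_resultant_ne_zero {g f : ℤ[X]} (hres : resultant g f ≠ 0)
    (hg : g ≠ 0) {α : ℂ} (hgα : aeval α g = 0) {d : ℕ} {H R : ℝ}
    (hH : ∀ i, |(f.coeff i : ℝ)| ≤ H) (hfd : f.natDegree ≤ d) (hR : 1 ≤ R)
    (hroots : ∀ β ∈ (g.map (algebraMap ℤ ℂ)).roots, ‖β‖ ≤ R) :
    1 ≤ |(g.leadingCoeff : ℝ)| ^ d * ‖aeval α f‖ * ((d + 1) * H * R ^ d) ^ (g.natDegree - 1) := by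
  set G := g.map (algebraMap ℤ ℂ)
  have hinj : Function.Injective (algebraMap ℤ ℂ) := RingHom.injective_int _
  have hαG : α ∈ G.roots :=
    (mem_roots ((Polynomial.map_ne_zero_iff hinj).mpr hg)).mpr (by rwa [IsRoot, eval_map_algebraMap])
  have hcard : Multiset.card (G.roots.erase α) = g.natDegree - 1 := by
    rw [Multiset.card_erase_of_mem hαG, ← (IsAlgClosed.splits G).natDegree_eq_card_roots,
      natDegree_map_eq_of_injective hinj, Nat.pred_eq_sub_one]
  have hL : 1 ≤ |(g.leadingCoeff : ℝ)| := by
    exact_mod_cast Int.one_le_abs (leadingCoeff_ne_zero.mpr hg)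
  have hrest : ‖((G.roots.erase α).map fun β => aeval β f).prod‖ ≤
      ((d + 1) * H * R ^ d) ^ (g.natDegree - 1) := by
    rw [← hcard, ← Multiset.card_map (fun β => aeval β f)]
    refine Multiset.norm_prod_le_pow_card fun z hz => ?_
    obtain ⟨β, hβ, rfl⟩ := Multiset.mem_map.mp hz
    exact norm_aeval_le_of_abs_coeff_le hH hfd hR (hroots β (Multiset.mem_of_mem_erase hβ))
  calc (1 : ℝ) ≤ |((resultant g f : ℤ) : ℝ)| := by exact_mod_cast Int.one_le_abs hres
    _ = ‖((resultant g f : ℤ) : ℂ)‖ := by rw [Complex.norm_intCast]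
    _ = |(g.leadingCoeff : ℝ)| ^ f.natDegree *
          (‖aeval α f‖ * ‖((G.roots.erase α).map fun β => aeval β f).prod‖) := by
        rw [intCast_resultant_eq_leadingCoeff_pow_mul_prod_roots, ← Multiset.prod_map_erase hαG,
          norm_mul, norm_mul, norm_pow, Complex.norm_intCast]
    _ ≤ _ := by
        rw [← mul_assoc]
        gcongr

end Polynomial

namespace IsAlgebraic

theorem exists_int_aeval_eq_zero_resultant_ne_zero {K : Type*} [Field K] [Algebra ℚ K] {α : K}
    (hα : IsAlgebraic ℚ α) :
    ∃ g : ℤ[X], g ≠ 0 ∧ aeval α g = 0 ∧ ∀ f : ℤ[X], aeval α f ≠ 0 → resultant g f ≠ 0 := by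
  set p := minpoly ℚ α
  obtain ⟨b, hb, hgp⟩ := IsLocalization.integerNormalization_spec (nonZeroDivisors ℤ) p
  have hb0 : (b : ℚ) ≠ 0 := by exact_mod_cast nonZeroDivisors.ne_zero hb
  refine ⟨IsLocalization.integerNormalization (nonZeroDivisors ℤ) p,
    (IsLocalization.integerNormalization_eq_zero_iff le_rfl p).not.mpr
      (minpoly.ne_zero hα.isIntegral),
    IsLocalization.integerNormalization_aeval_eq_zero _ p (minpoly.aeval ℚ α), fun f hf => ?_⟩
  refine resultant_ne_zero_of_isCoprime_map (RingHom.injective_int (algebraMap ℤ ℚ)) ?_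
  rw [hgp, zsmul_eq_mul, ← C_eq_intCast,
    isCoprime_mul_unit_left_left (isUnit_C.mpr (isUnit_iff_ne_zero.mpr hb0))]
  exact minpoly.isCoprime_of_aeval_ne_zero hα.isIntegral (by rwa [aeval_map_algebraMap])

theorem exists_one_le_norm_aeval_mul {α : ℂ} (hα : IsAlgebraic ℚ α) :
    ∃ L R : ℝ, 1 ≤ L ∧ 1 ≤ R ∧ ∃ n : ℕ, ∀ (d : ℕ) (H : ℝ) (f : ℤ[X]),
      (∀ i, |(f.coeff i : ℝ)| ≤ H) → f.natDegree ≤ d → aeval α f ≠ 0 →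
        1 ≤ L ^ d * ‖aeval α f‖ * ((d + 1) * H * R ^ d) ^ n := by
  obtain ⟨g, hg, hgα, hres⟩ := hα.exists_int_aeval_eq_zero_resultant_ne_zero
  obtain ⟨R, hR⟩ := ((g.map (algebraMap ℤ ℂ)).roots.toFinset.image (‖·‖)).bddAbove
  refine ⟨|(g.leadingCoeff : ℝ)|, max 1 R, ?_, le_max_left 1 R, g.natDegree - 1,
    fun d H f hH hfd hf => one_le_norm_aeval_mul_of_resultant_ne_zero (hres f hf) hg hgα hH hfd
      (le_max_left 1 R) fun β hβ =>
        le_max_of_le_right (hR (Finset.mem_image_of_mem _ (Multiset.mem_toFinset.mpr hβ)))⟩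
  exact_mod_cast Int.one_le_abs (leadingCoeff_ne_zero.mpr hg)

end IsAlgebraic

theorem succ_mul_two_pow_mul_pow_le (d : ℕ) {R : ℝ} (hR : 0 ≤ R) :
    (d + 1) * 2 ^ d * R ^ d ≤ (4 * R) ^ d := by
  have hd : (d + 1 : ℝ) ≤ 2 ^ d := by exact_mod_cast Nat.lt_two_pow_self
  calc (d + 1 : ℝ) * 2 ^ d * R ^ d ≤ 2 ^ d * 2 ^ d * R ^ d := by gcongr
    _ = (4 * R) ^ d := by rw [mul_pow, ← mul_pow]; norm_num

theorem two_rpow_neg_le_of_one_le_mul_pow {F Q : ℝ} {k d : ℕ} (hQ : 1 ≤ Q) (hQk : Q ≤ 2 ^ k)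
    (h : 1 ≤ F * Q ^ d) : (2 : ℝ) ^ (-((k + 1 : ℝ) * (d : ℝ) ^ 2)) ≤ F := by
  have hdd : (d : ℝ) ≤ (d : ℝ) ^ 2 := by exact_mod_cast Nat.le_self_pow two_ne_zero d
  calc (2 : ℝ) ^ (-((k + 1 : ℝ) * (d : ℝ) ^ 2)) ≤ (2 : ℝ) ^ (-((k * d : ℕ) : ℝ)) := by
        apply Real.rpow_le_rpow_of_exponent_le one_le_two
        push_cast
        nlinarith [Nat.cast_nonneg (α := ℝ) k, Nat.cast_nonneg (α := ℝ) d]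
    _ = ((2 ^ k) ^ d)⁻¹ := by rw [Real.rpow_neg zero_le_two, Real.rpow_natCast, pow_mul]
    _ ≤ (Q ^ d)⁻¹ := inv_anti₀ (pow_pos (zero_lt_one.trans_le hQ) d) (by gcongr)
    _ ≤ F := (inv_le_iff_one_le_mul₀ (pow_pos (zero_lt_one.trans_le hQ) d)).mpr h

/-- For a real algebraic number `α` there is a constant `c > 0` such that, for
all sufficiently large `d`, every integer polynomial `f` of height at most
`2^d` and degree at most `d` with `f(α) ≠ 0` satisfies `|f(α)| ≥ 2^(-c d²)`. -/
theorem stmt_17 (α : ℝ) (hα : IsAlgebraic ℚ α) :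
    ∃ c : ℝ, 0 < c ∧ ∃ d₀ : ℕ, ∀ d : ℕ, d₀ ≤ d →
      ∀ f : Polynomial ℤ,
        (∀ i, |f.coeff i| ≤ 2 ^ d) → f.natDegree ≤ d →
        Polynomial.aeval α f ≠ 0 →
        (2 : ℝ) ^ (-(c * (d : ℝ) ^ 2)) ≤ |Polynomial.aeval α f| := by
  obtain ⟨L, R, hL, hR, n, hliouville⟩ :=
    IsAlgebraic.exists_one_le_norm_aeval_mul (hα.algebraMap (A := ℂ))
  obtain ⟨k, hk⟩ := pow_unbounded_of_one_lt (L * (4 * R) ^ n) one_lt_two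
  refine ⟨k + 1, by positivity, 0, fun d _ f hcoeff hfd hf => ?_⟩
  have hαℂ : aeval (algebraMap ℝ ℂ α) f = (aeval α f : ℂ) := aeval_algebraMap_apply ℂ α f
  have h := hliouville d (2 ^ d) f (fun i => by exact_mod_cast hcoeff i) hfd
    (by rwa [hαℂ, Complex.ofReal_ne_zero])
  rw [hαℂ, Complex.norm_real, Real.norm_eq_abs] at h
  refine two_rpow_neg_le_of_one_le_mul_pow
    (one_le_mul_of_one_le_of_one_le hL (one_le_pow₀ (by linarith))) hk.le (h.trans ?_)
  calc L ^ d * |aeval α f| * ((d + 1) * 2 ^ d * R ^ d) ^ n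
      ≤ L ^ d * |aeval α f| * ((4 * R) ^ d) ^ n := by
        gcongr
        exact succ_mul_two_pow_mul_pow_le d (by linarith)
    _ = |aeval α f| * (L * (4 * R) ^ n) ^ d := by ring
end
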